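/- Let ψ = Σ_{x∈𝔽₂ⁿ} c_x |x⟩ be an n-qubit pure state written in the computational basis. Then 32ⁿ Σ_{x∈𝔽₂^{2n}} p̂_ψ(x)³ ≥ |c_{0ⁿ}|^{12}, where c_{0ⁿ} is the amplitude on the all-zeros basis state. -/

import Mathlib

open scoped BigOperators
open Finset

noncomputable section

/-- Length-`n` bit strings, i.e. `𝔽₂ⁿ`. -/
abbrev BV (n : ℕ) := Fin n → ZMod 2

/-- Integer-valued inner product: number of coordinates where both strings are 1. -/
def bdot {n : ℕ} (p q : BV n) : ℕ :=
  (Finset.univ.filter (fun i => p i = 1 ∧ q i = 1)).card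

/-- The Weyl operator `W_x` for `x = (p, q) ∈ 𝔽₂^{2n}`:
`W_x |b⟩ = i^{p·q} (−1)^{q·b} |b ⊕ p⟩`. -/
def Weyl {n : ℕ} (x : BV n × BV n) : Matrix (BV n) (BV n) ℂ :=
  Matrix.of fun r c => if r = c + x.1 then Complex.I ^ bdot x.1 x.2 * (-1 : ℂ) ^ bdot x.2 c else 0

/-- `⟨ψ|W_x|ψ⟩`. -/
def weylExp {n : ℕ} (ψ : BV n → ℂ) (x : BV n × BV n) : ℂ :=
  ∑ r : BV n, (starRingEnd ℂ) (ψ r) * ((Weyl x).mulVec ψ r)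

/-- `ψ` is an `n`-qubit pure state, i.e. a unit vector in `ℂ^{2ⁿ}`. -/
def IsState {n : ℕ} (ψ : BV n → ℂ) : Prop :=
  ∑ b : BV n, ‖ψ b‖ ^ 2 = 1

/-- The characteristic distribution `p_ψ(x) = 2^{−n} |⟨ψ|W_x|ψ⟩|²`. -/
def charDist {n : ℕ} (ψ : BV n → ℂ) (x : BV n × BV n) : ℝ :=
  (2 ^ n : ℝ)⁻¹ * ‖weylExp ψ x‖ ^ 2

/-- The Weyl distribution `q_ψ(x) = Σ_y p_ψ(y) p_ψ(x ⊕ y)`. -/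
def weylDist {n : ℕ} (ψ : BV n → ℂ) (x : BV n × BV n) : ℝ :=
  ∑ y : BV n × BV n, charDist ψ y * charDist ψ (x + y)

/-- Fourier coefficient `f̂(s) = 4^{−n} Σ_x f(x) (−1)^{x·s}` for `f : 𝔽₂^{2n} → ℝ`. -/
def booleanFourier {n : ℕ} (f : BV n × BV n → ℝ) (s : BV n × BV n) : ℝ :=
  (4 ^ n : ℝ)⁻¹ * ∑ x : BV n × BV n, f x * (-1 : ℝ) ^ (bdot x.1 s.1 + bdot x.2 s.2)

/-- The Hadamard gate on qubit `j`. -/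
def Hgate {n : ℕ} (j : Fin n) : Matrix (BV n) (BV n) ℂ :=
  Matrix.of fun r c =>
    if ∀ i, i ≠ j → r i = c i then
      (((Real.sqrt 2 : ℝ) : ℂ))⁻¹ * (-1 : ℂ) ^ ((r j).val * (c j).val)
    else 0

/-- The phase gate `S = diag(1, i)` on qubit `j`. -/
def Sgate {n : ℕ} (j : Fin n) : Matrix (BV n) (BV n) ℂ :=
  Matrix.of fun r c => if r = c then Complex.I ^ (r j).val else 0

/-- The CNOT gate with control qubit `j` and target qubit `k`. -/
def CNOTgate {n : ℕ} (j k : Fin n) : Matrix (BV n) (BV n) ℂ :=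
  Matrix.of fun r c => if r = Function.update c k (c k + c j) then 1 else 0

/-- The generators of the `n`-qubit Clifford group. -/
def cliffordGens (n : ℕ) : Set (Matrix (BV n) (BV n) ℂ) :=
  {M | (∃ j, M = Hgate j) ∨ (∃ j, M = Sgate j) ∨ (∃ j k, j ≠ k ∧ M = CNOTgate j k)}

/-- The `n`-qubit Clifford group `𝒞ₙ`: all finite products of the generators.
(Each generator has finite order, so this coincides with the generated group.) -/
def CliffordGroup (n : ℕ) : Submonoid (Matrix (BV n) (BV n) ℂ) :=
  Submonoid.closure (cliffordGens n)

/-- The all-zeros basis state `|0ⁿ⟩`. -/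
def e0 {n : ℕ} : BV n → ℂ := fun b => if b = 0 then 1 else 0

/-- The set of `n`-qubit stabilizer states `𝒮ₙ = {C|0ⁿ⟩ : C ∈ 𝒞ₙ}`. -/
def stabStates (n : ℕ) : Set (BV n → ℂ) :=
  {φ | ∃ C ∈ CliffordGroup n, φ = C.mulVec e0}

/-- The inner product `⟨φ|ψ⟩`. -/
def innerC {n : ℕ} (φ ψ : BV n → ℂ) : ℂ := ∑ b : BV n, (starRingEnd ℂ) (φ b) * ψ b

/-- The stabilizer fidelity `F_𝒮(ψ) = max_{φ ∈ 𝒮ₙ} |⟨φ|ψ⟩|²`. -/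
def stabFidelity {n : ℕ} (ψ : BV n → ℂ) : ℝ :=
  sSup {r | ∃ φ ∈ stabStates n, r = ‖innerC φ ψ‖ ^ 2}

/-- The stabilizer extent `ξ(ψ)`: the minimum of `(Σᵢ |cᵢ|)²` over all finite
decompositions `ψ = Σᵢ cᵢ φᵢ` with stabilizer states `φᵢ`. -/
def stabExtent {n : ℕ} (ψ : BV n → ℂ) : ℝ :=
  sInf {r | ∃ (m : ℕ) (c : Fin m → ℂ) (φ : Fin m → (BV n → ℂ)),
    (∀ i, φ i ∈ stabStates n) ∧ ψ = ∑ i, c i • φ i ∧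
    r = (∑ i, ‖c i‖) ^ 2}

/-- The T-gate `T = diag(1, e^{iπ/4})` on qubit `j`. -/
def Tgate {n : ℕ} (j : Fin n) : Matrix (BV n) (BV n) ℂ :=
  Matrix.of fun r c => if r = c then Complex.exp (Complex.I * Real.pi / 4) ^ (r j).val else 0

/-- The `m`-fold tensor power `|T⟩^{⊗m}` of `|T⟩ = (|0⟩ + e^{iπ/4}|1⟩)/√2`. -/
def TstateM (m : ℕ) : BV m → ℂ :=
  fun b => ∏ i : Fin m, ((((Real.sqrt 2 : ℝ) : ℂ))⁻¹ * Complex.exp (Complex.I * Real.pi / 4) ^ (b i).val)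

end

/-!
Expanding `|⟨ψ|W_{(p,q)}|ψ⟩|²` and substituting `r' = r + t` gives
`|⟨ψ|W_{(p,q)}|ψ⟩|² = Σ_t (-1)^{q·t} K(p,t)` with the quartic correlation
`K(p,t) = Σ_r ψ̄(r) ψ(r+p) ψ(r+t) ψ̄(r+p+t)`.
Since `K` is symmetric in `p` and `t`, Walsh orthogonality makes the characteristic distribution
self-dual: `p̂_ψ(p,q) = 2⁻ⁿ p_ψ(q,p)`. Hence `32ⁿ Σ p̂_ψ³ = 4ⁿ Σ p_ψ³`, and it remains to keep only
the points `(0,q)`, apply the power-mean inequality over the `2ⁿ` values of `q`, and use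
`Σ_q p_ψ(0,q) = K(0,0) = Σ_b |ψ_b|⁴ ≥ |ψ_0|⁴`.
-/

open ComplexConjugate

section WeylDuality

variable {n : ℕ}

lemma BV.add_self (a : BV n) : a + a = 0 :=
  funext fun i => CharTwo.add_self_eq_zero (a i)

lemma BV.eq_add_iff {a b c : BV n} : a = b + c ↔ b = a + c := by
  constructor <;> rintro rfl <;> rw [add_assoc, BV.add_self, add_zero]

lemma natCast_bdot (a b : BV n) : (bdot a b : ZMod 2) = a ⬝ᵥ b := by
  rw [bdot, Finset.card_filter, Nat.cast_sum, dotProduct]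
  refine Finset.sum_congr rfl fun i _ => ?_
  have key : ∀ x y : ZMod 2, (((if x = 1 ∧ y = 1 then 1 else 0 : ℕ)) : ZMod 2) = x * y := by
    decide
  exact key (a i) (b i)

lemma bdot_comm (a b : BV n) : bdot a b = bdot b a := by
  simp only [bdot, and_comm]

def walsh (a : BV n) : AddChar (BV n) ℝ where
  toFun b := (-1) ^ bdot a b
  map_zero_eq_one' := by simp [bdot]
  map_add_eq_mul' b c := by
    rw [← pow_add]
    refine neg_one_pow_congr ?_
    simp only [← ZMod.natCast_eq_zero_iff_even, Nat.cast_add, natCast_bdot, dotProduct_add]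

lemma walsh_apply (a b : BV n) : walsh a b = (-1) ^ bdot a b := rfl

lemma walsh_comm (a b : BV n) : walsh a b = walsh b a := by
  rw [walsh_apply, walsh_apply, bdot_comm]

lemma walsh_eq_zero_iff {a : BV n} : walsh a = 0 ↔ a = 0 := by
  refine ⟨fun h => ?_, fun h => AddChar.eq_zero_iff.2 fun b => by simp [h, walsh_apply, bdot]⟩
  by_contra ha
  obtain ⟨i, hi⟩ := Function.ne_iff.1 ha
  have hai : a i = 1 := by
    have key : ∀ x : ZMod 2, x ≠ 0 → x = 1 := by decide
    exact key _ hi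
  have hbdot : bdot a (Pi.single i 1) = 1 := by
    rw [bdot, Finset.card_eq_one]
    refine ⟨i, Finset.ext fun j => ?_⟩
    by_cases hj : j = i
    · simp [hj, hai]
    · simp [hj]
  have := AddChar.eq_zero_iff.1 h (Pi.single i 1)
  rw [walsh_apply, hbdot] at this
  norm_num at this

lemma sum_walsh_mul_walsh (s t : BV n) :
    ∑ q, walsh q s * walsh q t = if s = t then 2 ^ n else 0 := by
  classical
  have hst : s + t = 0 ↔ s = t := by rw [eq_comm, BV.eq_add_iff, zero_add]
  simp_rw [← AddChar.map_add_eq_mul (walsh _), walsh_comm _ (s + t)]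
  rw [AddChar.sum_eq_ite]
  simp [walsh_eq_zero_iff, hst]

lemma weylExp_eq (ψ : BV n → ℂ) (p q : BV n) :
    weylExp ψ (p, q) =
      Complex.I ^ bdot p q * ∑ r, conj (ψ r) * walsh q (r + p) * ψ (r + p) := by
  rw [weylExp, Finset.mul_sum]
  refine Finset.sum_congr rfl fun r _ => ?_
  have hcol (c : BV n) : r = c + p ↔ c = r + p := BV.eq_add_iff
  simp only [Matrix.mulVec, dotProduct, Weyl, Matrix.of_apply, hcol, ite_mul, zero_mul,
    Finset.sum_ite_eq', Finset.mem_univ, if_true, walsh_apply]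
  push_cast
  ring

def quarticCorrelation (ψ : BV n → ℂ) (p t : BV n) : ℂ :=
  ∑ r, conj (ψ r) * ψ (r + p) * ψ (r + t) * conj (ψ (r + p + t))

lemma quarticCorrelation_comm (ψ : BV n → ℂ) (p t : BV n) :
    quarticCorrelation ψ p t = quarticCorrelation ψ t p := by
  refine Finset.sum_congr rfl fun r _ => ?_
  rw [add_right_comm]
  ring

lemma quarticCorrelation_zero_zero (ψ : BV n → ℂ) :
    quarticCorrelation ψ 0 0 = ∑ r, ((‖ψ r‖ ^ 4 : ℝ) : ℂ) := by
  refine Finset.sum_congr rfl fun r _ => ?_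
  simp only [add_zero]
  push_cast
  rw [show 4 = 2 * 2 from rfl, pow_mul, ← Complex.mul_conj']
  ring

lemma normSq_weylExp (ψ : BV n → ℂ) (p q : BV n) :
    ((‖weylExp ψ (p, q)‖ ^ 2 : ℝ) : ℂ) = ∑ t, walsh q t * quarticCorrelation ψ p t := by
  have hI : Complex.I ^ bdot p q * conj (Complex.I ^ bdot p q) = 1 := by
    rw [Complex.mul_conj', norm_pow, Complex.norm_I, one_pow, Complex.ofReal_one, one_pow]
  rw [Complex.ofReal_pow, ← Complex.mul_conj', weylExp_eq, map_mul, mul_mul_mul_comm, hI, one_mul,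
    map_sum, Finset.sum_mul_sum]
  simp_rw [quarticCorrelation, Finset.mul_sum]
  conv_rhs => rw [Finset.sum_comm]
  refine Finset.sum_congr rfl fun r _ => ?_
  rw [← Equiv.sum_comp (Equiv.addLeft r)]
  refine Finset.sum_congr rfl fun t _ => ?_
  have hw : (walsh q (r + p) : ℂ) * walsh q (r + t + p) = walsh q t := by
    rw [← Complex.ofReal_mul, ← AddChar.map_add_eq_mul, add_add_add_comm, BV.add_self p,
      add_zero, ← add_assoc, BV.add_self, zero_add]
  simp only [Equiv.coe_addLeft, map_mul, Complex.conj_conj, Complex.conj_ofReal]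
  rw [add_right_comm r p t]
  linear_combination (conj (ψ r) * ψ (r + p) * ψ (r + t) * conj (ψ (r + t + p))) * hw

lemma sum_walsh_mul_normSq_weylExp (ψ : BV n → ℂ) (p s : BV n) :
    ∑ q, (walsh q s : ℂ) * ((‖weylExp ψ (p, q)‖ ^ 2 : ℝ) : ℂ) =
      2 ^ n * quarticCorrelation ψ p s := by
  simp_rw [normSq_weylExp, Finset.mul_sum, ← mul_assoc]
  rw [Finset.sum_comm]
  have horth (t : BV n) : ∑ q, (walsh q s : ℂ) * walsh q t = if s = t then 2 ^ n else 0 := by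
    simpa [apply_ite] using congrArg ((↑) : ℝ → ℂ) (sum_walsh_mul_walsh s t)
  simp [← Finset.sum_mul, horth]

lemma sum_walsh_mul_walsh_mul_normSq_weylExp (ψ : BV n → ℂ) (s : BV n × BV n) :
    ∑ x : BV n × BV n, walsh x.1 s.1 * walsh x.2 s.2 * ‖weylExp ψ x‖ ^ 2 =
      2 ^ n * ‖weylExp ψ s.swap‖ ^ 2 := by
  apply Complex.ofReal_injective
  simp_rw [Complex.ofReal_sum, Complex.ofReal_mul, Fintype.sum_prod_type, mul_assoc,
    ← Finset.mul_sum, sum_walsh_mul_normSq_weylExp, Prod.swap, normSq_weylExp, Finset.mul_sum]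
  refine Finset.sum_congr rfl fun p _ => ?_
  rw [walsh_comm, quarticCorrelation_comm]
  push_cast
  ring

lemma booleanFourier_charDist (ψ : BV n → ℂ) (s : BV n × BV n) :
    booleanFourier (charDist ψ) s = (2 ^ n)⁻¹ * charDist ψ s.swap := by
  have hsum : ∑ x : BV n × BV n, charDist ψ x * (-1) ^ (bdot x.1 s.1 + bdot x.2 s.2) =
      (2 ^ n)⁻¹ * ∑ x : BV n × BV n, walsh x.1 s.1 * walsh x.2 s.2 * ‖weylExp ψ x‖ ^ 2 := by
    rw [Finset.mul_sum]
    refine Finset.sum_congr rfl fun x _ => ?_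
    rw [charDist, pow_add, walsh_apply, walsh_apply]
    ring
  rw [booleanFourier, hsum, sum_walsh_mul_walsh_mul_normSq_weylExp, charDist,
    show (4 : ℝ) ^ n = 2 ^ n * 2 ^ n by rw [← mul_pow]; norm_num]
  field_simp

lemma sum_charDist_zero_fst (ψ : BV n → ℂ) :
    ∑ q, charDist ψ (0, q) = ∑ b, ‖ψ b‖ ^ 4 := by
  have h := sum_walsh_mul_normSq_weylExp ψ 0 0
  simp only [AddChar.map_zero_eq_one, Complex.ofReal_one, one_mul,
    quarticCorrelation_zero_zero] at h
  simp only [charDist, ← Finset.mul_sum]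
  rw [inv_mul_eq_iff_eq_mul₀ (by positivity)]
  exact_mod_cast h

lemma norm_pow_twelve_le_sum_charDist_cube (ψ : BV n → ℂ) (b : BV n) :
    ‖ψ b‖ ^ 12 ≤ 4 ^ n * ∑ x, charDist ψ x ^ 3 := by
  have hnonneg (x : BV n × BV n) : 0 ≤ charDist ψ x := by rw [charDist]; positivity
  have hcard : (Fintype.card (BV n) : ℝ) = 2 ^ n := by simp
  calc ‖ψ b‖ ^ 12 = (‖ψ b‖ ^ 4) ^ 3 := by ring
    _ ≤ (∑ q, charDist ψ (0, q)) ^ 3 := by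
      rw [sum_charDist_zero_fst]
      gcongr
      exact Finset.single_le_sum (f := fun c => ‖ψ c‖ ^ 4) (fun c _ => by positivity)
        (Finset.mem_univ b)
    _ ≤ 4 ^ n * ∑ q, charDist ψ (0, q) ^ 3 := by
      rw [← div_le_iff₀' (by positivity), show (4 : ℝ) ^ n = (Fintype.card (BV n) : ℝ) ^ 2 by
        rw [hcard, ← pow_mul, pow_mul']; norm_num]
      exact pow_sum_div_card_le_sum_pow (fun q _ => hnonneg _) 2
    _ ≤ 4 ^ n * ∑ x, charDist ψ x ^ 3 := by
      rw [Fintype.sum_prod_type]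
      refine mul_le_mul_of_nonneg_left ?_ (by positivity)
      exact Finset.single_le_sum (f := fun p => ∑ q, charDist ψ (p, q) ^ 3)
        (fun p _ => Finset.sum_nonneg fun q _ => pow_nonneg (hnonneg _) 3) (Finset.mem_univ 0)

end WeylDuality

theorem sum_fourier_cubed_ge_amplitude_general {n : ℕ} (ψ : BV n → ℂ) :
    ‖ψ 0‖ ^ 12 ≤
      (32 ^ n : ℝ) * ∑ x : BV n × BV n, booleanFourier (charDist ψ) x ^ 3 := by
  have hfourier : ∑ x : BV n × BV n, booleanFourier (charDist ψ) x ^ 3 =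
      ((2 ^ n)⁻¹) ^ 3 * ∑ x : BV n × BV n, charDist ψ x.swap ^ 3 := by
    simp only [booleanFourier_charDist, mul_pow, Finset.mul_sum]
  have hswap : ∑ x : BV n × BV n, charDist ψ x.swap ^ 3 = ∑ x, charDist ψ x ^ 3 :=
    Equiv.sum_comp (Equiv.prodComm _ _) (fun x => charDist ψ x ^ 3)
  calc ‖ψ 0‖ ^ 12 ≤ 4 ^ n * ∑ x, charDist ψ x ^ 3 := norm_pow_twelve_le_sum_charDist_cube ψ 0
    _ = (32 ^ n : ℝ) * (((2 ^ n)⁻¹) ^ 3 * ∑ x, charDist ψ x ^ 3) := by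
      rw [← mul_assoc, show (32 : ℝ) ^ n = 4 ^ n * (2 ^ n) ^ 3 by
        rw [← pow_mul, pow_mul', ← mul_pow]; norm_num]
      field_simp
    _ = _ := by rw [hfourier, hswap]

/-- 32ⁿ Σ_x p̂_ψ(x)³ ≥ |c_{0ⁿ}|^{12}, where c_{0ⁿ} = ψ(0ⁿ) is the amplitude
of ψ on the all-zeros computational basis state. -/
theorem sum_fourier_cubed_ge_amplitude {n : ℕ} (hn : 1 ≤ n) (ψ : BV n → ℂ)
    (hψ : IsState ψ) :
    ‖ψ 0‖ ^ 12 ≤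
      (32 ^ n : ℝ) * ∑ x : BV n × BV n, booleanFourier (charDist ψ) x ^ 3 :=
  sum_fourier_cubed_ge_amplitude_general ψ
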